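/- Let n ≥ 1, let x_1,…,x_n ∈ ℂ be pairwise distinct, and let 0 ≤ r ≤ n. For 0 ≤ d ≤ n let σ_d denote the elementary symmetric polynomial of degree d in x_1,…,x_n; for 1 ≤ l ≤ n and 0 ≤ d ≤ n−1 let σ_{l,d} denote the elementary symmetric polynomial of degree d in the n−1 numbers x_1,…,x_n with x_l omitted; and let τ_l = ∏_{h ≠ l} (x_l − x_h). Let Σ be the n×n matrix with (l,j)-entry σ_{l, n−j}, and let X = diag(x_1,…,x_n), T = diag(τ_1^{−1},…,τ_n^{−1}). Then the matrix M = Σᵀ · X^r · T · Σ is block diagonal: M_{k,j} = 0 whenever exactly one of k, j is ≤ r; for k, j ∈ {1,…,r}: M_{k,j} = (−1)^{n−r}·σ_{n+r−k−j+1} if k + j ≥ r + 1 and M_{k,j} = 0 otherwise; for k, j ∈ {r+1,…,n}: M_{k,j} = (−1)^{n−r+1}·σ_{n+r−k−j+1} if k + j ≤ n + r + 1 and M_{k,j} = 0 otherwise. -/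

import Mathlib

open Matrix

/-- The elementary symmetric polynomial of degree `d` in the values of `x` over the
index set `s`. -/
noncomputable def elemSym {n : ℕ} (x : Fin n → ℂ) (s : Finset (Fin n)) (d : ℕ) : ℂ :=
  ∑ t ∈ Finset.powersetCard d s, ∏ i ∈ t, x i

lemma elemSym_zero {n : ℕ} (x : Fin n → ℂ) (s : Finset (Fin n)) : elemSym x s 0 = 1 := by
  simp [elemSym]

lemma elemSym_of_card_lt {n : ℕ} (x : Fin n → ℂ) (s : Finset (Fin n)) {d : ℕ}
    (h : s.card < d) : elemSym x s d = 0 := by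
  simp [elemSym, Finset.powersetCard_eq_empty.2 h]

lemma elemSym_rec {n : ℕ} (x : Fin n → ℂ) (s : Finset (Fin n)) (l : Fin n) (hl : l ∈ s)
    (d : ℕ) :
    elemSym x s (d+1) = elemSym x (s.erase l) (d+1) + x l * elemSym x (s.erase l) d := by
  unfold elemSym
  conv_lhs => rw [← Finset.insert_erase hl]
  rw [Finset.powersetCard_succ_insert (Finset.notMem_erase l s)]
  rw [Finset.sum_union]
  · congr 1
    rw [Finset.sum_image, Finset.mul_sum]
    · refine Finset.sum_congr rfl fun t ht => ?_
      rw [Finset.mem_powersetCard] at ht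
      rw [Finset.prod_insert fun hmem => (Finset.notMem_erase l s) (ht.1 hmem)]
    · intro t ht u hu htu
      rw [Finset.mem_coe, Finset.mem_powersetCard] at ht hu
      have hlt : l ∉ t := fun hmem => (Finset.notMem_erase l s) (ht.1 hmem)
      have hlu : l ∉ u := fun hmem => (Finset.notMem_erase l s) (hu.1 hmem)
      have := congrArg (Finset.erase · l) htu
      simpa [Finset.erase_insert hlt, Finset.erase_insert hlu] using this
  · rw [Finset.disjoint_left]
    intro t ht htimg
    rw [Finset.mem_powersetCard] at ht
    rcases Finset.mem_image.1 htimg with ⟨u, hu, rfl⟩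
    exact (Finset.notMem_erase l s) (ht.1 (Finset.mem_insert_self l u))

/-- Identity (A): expansion of σ_{l,d} in full elementary symmetric polynomials. -/
lemma expandA {n : ℕ} (x : Fin n → ℂ) (l : Fin n) (d : ℕ) :
    elemSym x (Finset.univ.erase l) d =
      ∑ i ∈ Finset.range (d+1), (-1)^i * x l ^ i * elemSym x Finset.univ (d - i) := by
  induction d with
  | zero => simp [elemSym_zero]
  | succ d ih =>
      have h := elemSym_rec x Finset.univ l (Finset.mem_univ l) d
      have : elemSym x (Finset.univ.erase l) (d+1)
          = elemSym x Finset.univ (d+1) - x l * elemSym x (Finset.univ.erase l) d := by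
        rw [h]; ring
      rw [this, ih]
      conv_rhs => rw [Finset.sum_range_succ']
      simp only [Nat.add_sub_cancel, pow_zero, one_mul, Nat.sub_zero]
      rw [Finset.mul_sum]
      have h2 : ∀ i ∈ Finset.range (d+1),
          (-1:ℂ)^(i+1) * x l ^ (i+1) * elemSym x Finset.univ (d + 1 - (i+1))
          = -(x l * ((-1)^i * x l ^ i * elemSym x Finset.univ (d - i))) := by
        intro i hi
        have : d + 1 - (i+1) = d - i := by omega
        rw [this]; ring
      rw [Finset.sum_congr rfl h2, Finset.sum_neg_distrib]
      ring

/-- Identity (B): downward expansion. -/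
lemma expandB {n : ℕ} (x : Fin n → ℂ) (l : Fin n) (c : ℕ) (hc : c ≤ n) :
    x l ^ c * elemSym x (Finset.univ.erase l) (n - c) =
      ∑ i ∈ Finset.range c, (-1)^i * elemSym x Finset.univ (n - c + i + 1) * x l ^ (c - i - 1) := by
  induction c with
  | zero =>
      have hcard : (Finset.univ.erase l).card < n := by
        rw [Finset.card_erase_of_mem (Finset.mem_univ l), Finset.card_univ, Fintype.card_fin]
        have hn0 : 0 < n := l.pos
        omega
      simp [elemSym_of_card_lt x _ hcard]
  | succ c ih =>
      have hcn : c < n := hc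
      have ih' := ih (le_of_lt hcn)
      have hrec : elemSym x Finset.univ (n - c)
          = elemSym x (Finset.univ.erase l) (n - c)
            + x l * elemSym x (Finset.univ.erase l) (n - (c+1)) := by
        have h1 : n - c = (n - (c+1)) + 1 := by omega
        rw [h1]
        exact elemSym_rec x Finset.univ l (Finset.mem_univ l) (n - (c+1))
      have key : x l ^ (c+1) * elemSym x (Finset.univ.erase l) (n - (c+1))
          = elemSym x Finset.univ (n - c) * x l ^ c
            - x l ^ c * elemSym x (Finset.univ.erase l) (n - c) := by
        have : x l * elemSym x (Finset.univ.erase l) (n - (c+1))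
            = elemSym x Finset.univ (n - c) - elemSym x (Finset.univ.erase l) (n - c) := by
          rw [hrec]; ring
        calc x l ^ (c+1) * elemSym x (Finset.univ.erase l) (n - (c+1))
            = x l ^ c * (x l * elemSym x (Finset.univ.erase l) (n - (c+1))) := by ring
          _ = _ := by rw [this]; ring
      rw [key, ih']
      conv_rhs => rw [Finset.sum_range_succ']
      have e0 : (-1:ℂ)^0 * elemSym x Finset.univ (n - (c+1) + 0 + 1) * x l ^ (c + 1 - 0 - 1)
          = elemSym x Finset.univ (n - c) * x l ^ c := by
        have : n - (c+1) + 0 + 1 = n - c := by omega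
        rw [this]; simp
      rw [e0]
      have h2 : ∀ i ∈ Finset.range c,
          (-1:ℂ)^(i+1) * elemSym x Finset.univ (n - (c+1) + (i+1) + 1) * x l ^ (c + 1 - (i+1) - 1)
          = -((-1)^i * elemSym x Finset.univ (n - c + i + 1) * x l ^ (c - i - 1)) := by
        intro i hi
        have ha : n - (c+1) + (i+1) + 1 = n - c + i + 1 := by omega
        have hb : c + 1 - (i+1) - 1 = c - i - 1 := by omega
        rw [ha, hb]; ring
      rw [Finset.sum_congr rfl h2, Finset.sum_neg_distrib]
      ring

lemma prod_sub_expand {n : ℕ} (x : Fin n → ℂ) (s : Finset (Fin n)) (y : ℂ) :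
    ∏ h ∈ s, (y - x h) =
      ∑ d ∈ Finset.range (s.card + 1), (-1)^d * elemSym x s d * y ^ (s.card - d) := by
  have h1 : ∀ h ∈ s, y - x h = -(x h) + y := fun _ _ => by ring
  rw [Finset.prod_congr rfl h1, Finset.prod_add, Finset.sum_powerset]
  refine Finset.sum_congr rfl fun d hd => ?_
  rw [elemSym, Finset.mul_sum, Finset.sum_mul]
  refine Finset.sum_congr rfl fun t ht => ?_
  rw [Finset.mem_powersetCard] at ht
  have hneg : ∏ i ∈ t, -x i = (-1:ℂ)^t.card * ∏ i ∈ t, x i := by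
    rw [← Finset.prod_const, ← Finset.prod_mul_distrib]
    simp
  rw [hneg, Finset.prod_const, Finset.card_sdiff_of_subset ht.1, ht.2]

lemma tau_ne_zero {n : ℕ} {x : Fin n → ℂ} (hx : Function.Injective x) (l : Fin n) :
    (∏ h ∈ Finset.univ.erase l, (x l - x h)) ≠ 0 := by
  refine Finset.prod_ne_zero_iff.2 fun h hh => ?_
  rw [Finset.mem_erase] at hh
  exact sub_ne_zero.2 fun he => hh.1 (hx he).symm

lemma eval_identity {n : ℕ} (x : Fin n → ℂ) (l m : Fin n) :
    ∑ k : Fin n, x l ^ k.1 * ((-1:ℂ)^(n-1-k.1) * elemSym x (Finset.univ.erase m) (n-1-k.1))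
      = ∏ h ∈ Finset.univ.erase m, (x l - x h) := by
  have hn : 0 < n := m.pos
  have hcard : (Finset.univ.erase m).card = n - 1 := by
    rw [Finset.card_erase_of_mem (Finset.mem_univ m), Finset.card_univ, Fintype.card_fin]
  rw [prod_sub_expand x _ (x l), hcard]
  have hn1 : n - 1 + 1 = n := by omega
  rw [hn1]
  rw [Fin.sum_univ_eq_sum_range (fun k => x l ^ k * ((-1:ℂ)^(n-1-k) * elemSym x (Finset.univ.erase m) (n-1-k)))]
  rw [← Finset.sum_range_reflect (fun d => (-1:ℂ)^d * elemSym x (Finset.univ.erase m) d * x l ^ (n-1-d)) n]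
  refine Finset.sum_congr rfl fun k hk => ?_
  rw [Finset.mem_range] at hk
  have : n - 1 - (n - 1 - k) = k := by omega
  rw [this]
  ring

lemma orth {n : ℕ} {x : Fin n → ℂ} (hx : Function.Injective x) (k m : Fin n) :
    ∑ l : Fin n, elemSym x (Finset.univ.erase l) (n-1-k.1)
        * (∏ h ∈ Finset.univ.erase l, (x l - x h))⁻¹ * x l ^ m.1
      = if k = m then (-1:ℂ)^(n-1-k.1) else 0 := by
  set W : Matrix (Fin n) (Fin n) ℂ := Matrix.of fun l m : Fin n => x l ^ m.1 with hW
  set B : Matrix (Fin n) (Fin n) ℂ := Matrix.of fun k l : Fin n =>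
    (-1:ℂ)^(n-1-k.1) * elemSym x (Finset.univ.erase l) (n-1-k.1)
      * (∏ h ∈ Finset.univ.erase l, (x l - x h))⁻¹ with hB
  have hWB : W * B = 1 := by
    ext l m
    rw [Matrix.mul_apply, Matrix.one_apply]
    have : ∀ kk : Fin n, W l kk * B kk m
        = x l ^ kk.1 * ((-1:ℂ)^(n-1-kk.1) * elemSym x (Finset.univ.erase m) (n-1-kk.1))
          * (∏ h ∈ Finset.univ.erase m, (x m - x h))⁻¹ := by
      intro kk
      simp only [hW, hB, Matrix.of_apply]
      ring
    rw [Finset.sum_congr rfl fun kk _ => this kk, ← Finset.sum_mul, eval_identity]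
    by_cases hlm : l = m
    · subst hlm
      rw [if_pos rfl, mul_inv_cancel₀ (tau_ne_zero hx l)]
    · rw [if_neg hlm]
      have hmem : l ∈ Finset.univ.erase m := Finset.mem_erase.2 ⟨hlm, Finset.mem_univ l⟩
      rw [Finset.prod_eq_zero hmem (sub_self (x l)), zero_mul]
  have hBW : B * W = 1 := mul_eq_one_comm.mp hWB
  have h1 := congrFun (congrFun hBW k) m
  rw [Matrix.mul_apply, Matrix.one_apply] at h1
  have h2 : ∑ l : Fin n, B k l * W l m
      = (-1:ℂ)^(n-1-k.1) * ∑ l : Fin n, elemSym x (Finset.univ.erase l) (n-1-k.1)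
          * (∏ h ∈ Finset.univ.erase l, (x l - x h))⁻¹ * x l ^ m.1 := by
    rw [Finset.mul_sum]
    refine Finset.sum_congr rfl fun l _ => ?_
    simp only [hW, hB, Matrix.of_apply]
    ring
  rw [h2] at h1
  have hsq : (-1:ℂ)^(n-1-k.1) * (-1:ℂ)^(n-1-k.1) = 1 := by
    rw [← pow_add]
    exact (neg_one_pow_eq_one_iff_even (by norm_num)).2 ⟨n-1-k.1, by ring⟩
  calc ∑ l : Fin n, elemSym x (Finset.univ.erase l) (n-1-k.1)
        * (∏ h ∈ Finset.univ.erase l, (x l - x h))⁻¹ * x l ^ m.1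
      = (-1:ℂ)^(n-1-k.1) * ((-1:ℂ)^(n-1-k.1) * ∑ l : Fin n, elemSym x (Finset.univ.erase l) (n-1-k.1)
          * (∏ h ∈ Finset.univ.erase l, (x l - x h))⁻¹ * x l ^ m.1) := by
        rw [← mul_assoc, hsq, one_mul]
    _ = (-1:ℂ)^(n-1-k.1) * (if k = m then 1 else 0) := by rw [h1]
    _ = if k = m then (-1:ℂ)^(n-1-k.1) else 0 := by
        by_cases h : k = m <;> simp [h]

lemma Mentry {n : ℕ} (x : Fin n → ℂ) (r : ℕ) (M : Matrix (Fin n) (Fin n) ℂ)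
    (hM : M = (Matrix.of fun l j : Fin n => elemSym x (Finset.univ.erase l) (n - 1 - j.1))ᵀ *
        (Matrix.diagonal x) ^ r *
        Matrix.diagonal (fun l => (∏ h ∈ Finset.univ.erase l, (x l - x h))⁻¹) *
        Matrix.of fun l j : Fin n => elemSym x (Finset.univ.erase l) (n - 1 - j.1))
    (k j : Fin n) :
    M k j = ∑ l : Fin n, elemSym x (Finset.univ.erase l) (n-1-k.1)
        * (∏ h ∈ Finset.univ.erase l, (x l - x h))⁻¹
        * (x l ^ r * elemSym x (Finset.univ.erase l) (n-1-j.1)) := by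
  subst hM
  rw [Matrix.diagonal_pow, Matrix.mul_apply]
  refine Finset.sum_congr rfl fun l _ => ?_
  rw [Matrix.mul_diagonal, Matrix.mul_diagonal]
  simp only [Matrix.transpose_apply, Matrix.of_apply, Pi.pow_apply]
  ring

lemma master {n : ℕ} {x : Fin n → ℂ} (hx : Function.Injective x) (r : ℕ)
    (M : Matrix (Fin n) (Fin n) ℂ)
    (hM : M = (Matrix.of fun l j : Fin n => elemSym x (Finset.univ.erase l) (n - 1 - j.1))ᵀ *
        (Matrix.diagonal x) ^ r *
        Matrix.diagonal (fun l => (∏ h ∈ Finset.univ.erase l, (x l - x h))⁻¹) *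
        Matrix.of fun l j : Fin n => elemSym x (Finset.univ.erase l) (n - 1 - j.1))
    (k j : Fin n) (c : Fin n → ℂ)
    (hc : ∀ l : Fin n, x l ^ r * elemSym x (Finset.univ.erase l) (n-1-j.1)
        = ∑ m : Fin n, c m * x l ^ m.1) :
    M k j = (-1:ℂ)^(n-1-k.1) * c k := by
  rw [Mentry x r M hM k j]
  have h1 : ∀ l : Fin n, elemSym x (Finset.univ.erase l) (n-1-k.1)
        * (∏ h ∈ Finset.univ.erase l, (x l - x h))⁻¹
        * (x l ^ r * elemSym x (Finset.univ.erase l) (n-1-j.1))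
      = ∑ m : Fin n, c m * (elemSym x (Finset.univ.erase l) (n-1-k.1)
        * (∏ h ∈ Finset.univ.erase l, (x l - x h))⁻¹ * x l ^ m.1) := by
    intro l
    rw [hc l, Finset.mul_sum]
    refine Finset.sum_congr rfl fun m _ => ?_
    ring
  rw [Finset.sum_congr rfl fun l _ => h1 l, Finset.sum_comm]
  have h2 : ∀ m : Fin n, ∑ l : Fin n, c m * (elemSym x (Finset.univ.erase l) (n-1-k.1)
        * (∏ h ∈ Finset.univ.erase l, (x l - x h))⁻¹ * x l ^ m.1)
      = c m * (if k = m then (-1:ℂ)^(n-1-k.1) else 0) := by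
    intro m
    rw [← Finset.mul_sum, orth hx k m]
  rw [Finset.sum_congr rfl fun m _ => h2 m]
  simp only [mul_ite, mul_zero]
  rw [Finset.sum_ite_eq]
  simp [mul_comm]

lemma hcA {n : ℕ} (x : Fin n → ℂ) (r : ℕ) (j : Fin n) (hjr : r ≤ j.1) (l : Fin n) :
    x l ^ r * elemSym x (Finset.univ.erase l) (n-1-j.1)
      = ∑ m : Fin n, (if r ≤ m.1 ∧ m.1 + j.1 + 1 ≤ n + r then
          (-1:ℂ)^(m.1-r) * elemSym x Finset.univ (n+r-1-m.1-j.1) else 0) * x l ^ m.1 := by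
  have hjn : j.1 < n := j.2
  set d := n - 1 - j.1 with hd
  have hrd : r + d + 1 ≤ n := by omega
  set g : ℕ → ℂ := fun m => (if r ≤ m ∧ m + j.1 + 1 ≤ n + r then
      (-1:ℂ)^(m-r) * elemSym x Finset.univ (n+r-1-m-j.1) else 0) * x l ^ m with hg
  have hfin : ∑ m : Fin n, (if r ≤ m.1 ∧ m.1 + j.1 + 1 ≤ n + r then
      (-1:ℂ)^(m.1-r) * elemSym x Finset.univ (n+r-1-m.1-j.1) else 0) * x l ^ m.1
      = ∑ m ∈ Finset.range n, g m := Fin.sum_univ_eq_sum_range g n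
  rw [hfin]
  have hsub : ∑ m ∈ Finset.range n, g m = ∑ m ∈ Finset.Ico r (r+d+1), g m := by
    refine (Finset.sum_subset ?_ ?_).symm
    · intro m hm
      rw [Finset.mem_Ico] at hm
      rw [Finset.mem_range]
      omega
    · intro m hm hnm
      rw [Finset.mem_range] at hm
      rw [Finset.mem_Ico] at hnm
      rw [hg]
      simp only
      rw [if_neg (by omega), zero_mul]
  rw [hsub, Finset.sum_Ico_eq_sum_range]
  have hlen : r + d + 1 - r = d + 1 := by omega
  rw [hlen]
  rw [expandA x l d, Finset.mul_sum]
  refine Finset.sum_congr rfl fun i hi => ?_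
  rw [Finset.mem_range] at hi
  rw [hg]
  simp only
  rw [if_pos (by omega)]
  have h1 : r + i - r = i := by omega
  have h2 : n + r - 1 - (r + i) - j.1 = d - i := by omega
  rw [h1, h2]
  ring

lemma hcB {n : ℕ} (x : Fin n → ℂ) (r : ℕ) (hr : r ≤ n) (j : Fin n) (hjr : j.1 < r)
    (l : Fin n) :
    x l ^ r * elemSym x (Finset.univ.erase l) (n-1-j.1)
      = ∑ m : Fin n, (if r ≤ m.1 + j.1 + 1 ∧ m.1 < r then
          (-1:ℂ)^(r-m.1-1) * elemSym x Finset.univ (n+r-1-m.1-j.1) else 0) * x l ^ m.1 := by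
  have hjn : j.1 < n := j.2
  set g : ℕ → ℂ := fun m => (if r ≤ m + j.1 + 1 ∧ m < r then
      (-1:ℂ)^(r-m-1) * elemSym x Finset.univ (n+r-1-m-j.1) else 0) * x l ^ m with hg
  have hfin : ∑ m : Fin n, (if r ≤ m.1 + j.1 + 1 ∧ m.1 < r then
      (-1:ℂ)^(r-m.1-1) * elemSym x Finset.univ (n+r-1-m.1-j.1) else 0) * x l ^ m.1
      = ∑ m ∈ Finset.range n, g m := Fin.sum_univ_eq_sum_range g n
  rw [hfin]
  have hsub : ∑ m ∈ Finset.range n, g m = ∑ m ∈ Finset.Ico (r-j.1-1) r, g m := by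
    refine (Finset.sum_subset ?_ ?_).symm
    · intro m hm
      rw [Finset.mem_Ico] at hm
      rw [Finset.mem_range]
      omega
    · intro m hm hnm
      rw [Finset.mem_range] at hm
      rw [Finset.mem_Ico] at hnm
      rw [hg]
      simp only
      rw [if_neg (by omega), zero_mul]
  rw [hsub, Finset.sum_Ico_eq_sum_range]
  have hlen : r - (r - j.1 - 1) = j.1 + 1 := by omega
  rw [hlen]
  -- LHS: use expandB with c = j+1, multiplied by x^(r-j-1)
  have hnd : n - 1 - j.1 = n - (j.1+1) := by omega
  have hxr : x l ^ r = x l ^ (r - j.1 - 1) * x l ^ (j.1 + 1) := by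
    rw [← pow_add]
    congr 1
    omega
  rw [hnd, hxr, mul_assoc, expandB x l (j.1+1) (by omega), Finset.mul_sum]
  rw [← Finset.sum_range_reflect]
  refine Finset.sum_congr rfl fun i hi => ?_
  rw [Finset.mem_range] at hi
  rw [hg]
  simp only
  rw [if_pos (by omega)]
  have e1 : r - (r - j.1 - 1 + i) - 1 = j.1 - i := by omega
  have e2 : n + r - 1 - (r - j.1 - 1 + i) - j.1 = n - i := by omega
  have e3 : j.1 + 1 - 1 - i = j.1 - i := by omega
  have e4 : n - (j.1+1) + (j.1 - i) + 1 = n - i := by omega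
  have e5 : j.1 + 1 - (j.1 - i) - 1 = i := by omega
  rw [e1, e2, e3, e4, e5, pow_add]
  ring

/-- Block-diagonal structure of `M = Σᵀ X^r T Σ`, where
`Σ_{l,j} = σ_{l,n−j}` (1-based `j`), `X = diag(x_l)`, `T = diag(τ_l⁻¹)`. Entries are
expressed through full elementary symmetric polynomials. All indices below are 0-based;
the 1-based index `k` of the natural-language statement corresponds to `k.val + 1`. -/
theorem stmt_18 (n : ℕ) (hn : 1 ≤ n) (x : Fin n → ℂ) (hx : Function.Injective x)
    (r : ℕ) (hr : r ≤ n) (M : Matrix (Fin n) (Fin n) ℂ)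
    (hM : M = (Matrix.of fun l j : Fin n => elemSym x (Finset.univ.erase l) (n - 1 - j.1))ᵀ *
        (Matrix.diagonal x) ^ r *
        Matrix.diagonal (fun l => (∏ h ∈ Finset.univ.erase l, (x l - x h))⁻¹) *
        Matrix.of fun l j : Fin n => elemSym x (Finset.univ.erase l) (n - 1 - j.1)) :
    (∀ k j : Fin n, ((k.1 < r ∧ ¬ j.1 < r) ∨ (¬ k.1 < r ∧ j.1 < r)) → M k j = 0) ∧
      (∀ k j : Fin n, k.1 < r → j.1 < r →
        (r ≤ k.1 + j.1 + 1 →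
            M k j = (-1) ^ (n - r) * elemSym x Finset.univ (n + r - 1 - k.1 - j.1)) ∧
          (k.1 + j.1 + 1 < r → M k j = 0)) ∧
      (∀ k j : Fin n, r ≤ k.1 → r ≤ j.1 →
        (k.1 + j.1 + 1 ≤ n + r →
            M k j = (-1) ^ (n - r + 1) * elemSym x Finset.univ (n + r - 1 - k.1 - j.1)) ∧
          (n + r < k.1 + j.1 + 1 → M k j = 0)) := by
  refine ⟨?_, ?_, ?_⟩
  · rintro k j (⟨hk, hj⟩ | ⟨hk, hj⟩)
    · rw [master hx r M hM k j _ (hcA x r j (by omega))]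
      rw [if_neg (by omega), mul_zero]
    · rw [master hx r M hM k j _ (hcB x r hr j hj)]
      rw [if_neg (by omega), mul_zero]
  · intro k j hk hj
    constructor
    · intro hkj
      rw [master hx r M hM k j _ (hcB x r hr j hj), if_pos (by omega)]
      rw [← mul_assoc, ← pow_add, neg_one_pow_eq_pow_mod_two]
      conv_rhs => rw [neg_one_pow_eq_pow_mod_two]
      have hkn : k.1 < n := k.2
      congr 2
      omega
    · intro hkj
      rw [master hx r M hM k j _ (hcB x r hr j hj)]
      rw [if_neg (by omega), mul_zero]
  · intro k j hk hj
    constructor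
    · intro hkj
      rw [master hx r M hM k j _ (hcA x r j hj), if_pos (by omega)]
      rw [← mul_assoc, ← pow_add, neg_one_pow_eq_pow_mod_two]
      conv_rhs => rw [neg_one_pow_eq_pow_mod_two]
      have hkn : k.1 < n := k.2
      congr 2
      omega
    · intro hkj
      rw [master hx r M hM k j _ (hcA x r j hj)]
      rw [if_neg (by omega), mul_zero]
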